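/- arXiv:1309.2685 — 2 statements merged into one kernel-verified Lean document; each statement's English description precedes it below -/
import Mathlib

section
/- Let v be a complete valuation on the downset lattice of a finite poset P with weight function w, and define the complementary strict order x ≺' y iff v(↓x) < v(↓y) and v'(↑x) < v'(↑y) and x ≠ y restricted to incomparable pairs (equivalently, x <₁ y in the first induced linear order and y <₂ x in the second). Then for every y ∈ P, w(y) = 1 + Σ_{x ≺' y} w(x). -/
open Finset

variable (P : Type*) [PartialOrder P] [Fintype P] [DecidableEq P]

/-- The lattice of downsets (lower sets) of a finite poset `P`. -/
def DownSet : Type _ := {A : Finset P // IsLowerSet (↑A : Set P)}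

variable {P}

instance : Lattice (DownSet P) :=
  Subtype.lattice (fun _ _ hA hB => by simpa [Finset.sup_eq_union] using hA.union hB)
    (fun _ _ hA hB => by simpa [Finset.inf_eq_inter] using hA.inter hB)

instance : OrderBot (DownSet P) :=
  Subtype.orderBot (by simp [Finset.bot_eq_empty, isLowerSet_empty])

noncomputable instance : Fintype (DownSet P) :=
  Fintype.ofInjective Subtype.val Subtype.val_injective

/-- The valuation associated to a weight function `w`. -/
def vval (w : P → ℕ) (A : DownSet P) : ℕ := ∑ x ∈ A.1, w x

variable [DecidableRel ((· ≤ ·) : P → P → Prop)]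

/-- The principal downset of `y`. -/
def pd (y : P) : DownSet P :=
  ⟨univ.filter (· ≤ y), by
    intro a b hba ha
    simp only [coe_filter, Set.mem_setOf_eq, mem_univ, true_and] at *
    exact hba.trans ha⟩

/-- The dual valuation evaluated on the principal upset of `x`. -/
def vup (w : P → ℕ) (x : P) : ℕ := ∑ z ∈ univ.filter (fun z => x ≤ z), w z

/-- `T` is an initial segment for the valuation `v`. -/
def Initial (v : DownSet P → ℕ) (T : Set (DownSet P)) : Prop :=
  ∃ j, v '' T = {k | k < j}

/-- `T` is a final segment for the valuation `v`. -/
def Final (v : DownSet P → ℕ) (T : Set (DownSet P)) : Prop :=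
  ∃ j, v '' T = {k | j ≤ k ∧ k < Fintype.card (DownSet P)}

/-- The set of arbitrary (nonempty) joins of elements of `T`. -/
def joinSet (T : Set (DownSet P)) : Set (DownSet P) :=
  {a | ∃ S : Finset (DownSet P), ↑S ⊆ T ∧ ∃ hS : S.Nonempty, a = S.sup' hS id}

/-- The set of arbitrary (nonempty) meets of elements of `T`. -/
def meetSet (T : Set (DownSet P)) : Set (DownSet P) :=
  {a | ∃ S : Finset (DownSet P), ↑S ⊆ T ∧ ∃ hS : S.Nonempty, a = S.inf' hS id}

/-- A complete valuation: bijective onto `{0,…,|L|-1}`, join-closures of initial segments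
are initial segments, meet-closures of final segments are final segments. -/
def IsCompleteValuation (w : P → ℕ) : Prop :=
  Set.BijOn (vval w) Set.univ {k | k < Fintype.card (DownSet P)} ∧
  (∀ T, Initial (vval w) T → Initial (vval w) (joinSet T)) ∧
  (∀ T, Final (vval w) T → Final (vval w) (meetSet T))

/-- The complementary order from two linear orders: `x ≤' y` iff `le1 x y` and `le2 y x`. -/
def le'' (le1 le2 : P → P → Prop) (x y : P) : Prop := le1 x y ∧ le2 y x

/-- The number of chains (under the complementary order) with maximum element `y`. -/
noncomputable def chainCount (le1 le2 : P → P → Prop) (y : P) : ℕ :=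
  Set.ncard {C : Finset P | y ∈ C ∧ (∀ a ∈ C, le'' le1 le2 a y) ∧
    ∀ a ∈ C, ∀ b ∈ C, le'' le1 le2 a b ∨ le'' le1 le2 b a}

/-- `{le1, le2}` is a realizer of `P`. -/
def IsRealizer (le1 le2 : P → P → Prop) : Prop :=
  IsLinearOrder P le1 ∧ IsLinearOrder P le2 ∧ ∀ x y : P, x ≤ y ↔ le1 x y ∧ le2 x y

/-!
For a complete valuation the downset `{z | v(↓z) < v(↓y)}` is the join of all downsets of value
`< v(↓y)`; completeness forces it to be the predecessor of `↓y` in the valuation order, so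
`∑_{v(↓z) < v(↓y)} w z = v(↓y) - 1`. Removing the elements below `y` leaves
`w y = 1 + ∑ w z` over the `z ≰ y` with `v(↓z) < v(↓y)`. Dually (meets of final segments),
`w y = 1 + ∑ w z` over the `z` with `y ≰ z` and `v'(↑z) < v'(↑y)`. Since all weights are positive,
an induction along `v(↓·)` shows that these two index sets coincide; their common elements are
exactly the `x ≺' y`.
-/

section CompleteValuation

variable {P : Type*} [PartialOrder P] [DecidableEq P]

lemma vval_mono (w : P → ℕ) : Monotone (vval w : DownSet P → ℕ) :=
  fun _ _ hAB => sum_le_sum_of_subset hAB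

variable [Fintype P]

namespace DownSet

instance : OrderTop (DownSet P) :=
  Subtype.orderTop (by simp [Finset.top_eq_univ, isLowerSet_univ])

lemma mem_joinSet_of_isLUB {T : Set (DownSet P)} {B : DownSet P} (hT : T.Nonempty)
    (hB : IsLUB T B) : B ∈ joinSet T := by
  classical
  have hS : (Set.toFinite T).toFinset.Nonempty := by simpa using hT
  refine ⟨(Set.toFinite T).toFinset, by simp, hS, le_antisymm ?_ ?_⟩
  · exact hB.2 fun A hA => le_sup' id ((Set.toFinite T).mem_toFinset.2 hA)
  · exact sup'_le _ _ fun A hA => hB.1 ((Set.toFinite T).mem_toFinset.1 hA)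

lemma mem_meetSet_of_isGLB {T : Set (DownSet P)} {B : DownSet P} (hT : T.Nonempty)
    (hB : IsGLB T B) : B ∈ meetSet T := by
  classical
  have hS : (Set.toFinite T).toFinset.Nonempty := by simpa using hT
  refine ⟨(Set.toFinite T).toFinset, by simp, hS, le_antisymm ?_ ?_⟩
  · exact le_inf' _ _ fun A hA => hB.1 ((Set.toFinite T).mem_toFinset.1 hA)
  · exact hB.2 fun A hA => inf'_le id ((Set.toFinite T).mem_toFinset.2 hA)

end DownSet

namespace IsCompleteValuation

variable {w : P → ℕ} (h : IsCompleteValuation w)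
include h

lemma vval_injective : Function.Injective (vval w : DownSet P → ℕ) :=
  fun _ _ hAB => h.1.2.1 (Set.mem_univ _) (Set.mem_univ _) hAB

lemma vval_strictMono : StrictMono (vval w : DownSet P → ℕ) :=
  (vval_mono w).strictMono_of_injective h.vval_injective

lemma vval_lt_card (A : DownSet P) : vval w A < Fintype.card (DownSet P) :=
  h.1.1 (Set.mem_univ A)

lemma exists_vval_eq {k : ℕ} (hk : k < Fintype.card (DownSet P)) : ∃ A, vval w A = k := by
  obtain ⟨A, -, hA⟩ := h.1.2.2 hk
  exact ⟨A, hA⟩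

lemma initial_setOf_vval_lt (C : DownSet P) : Initial (vval w) {A | vval w A < vval w C} := by
  refine ⟨vval w C, Set.Subset.antisymm (Set.image_subset_iff.2 fun A hA => hA)
    fun k (hk : k < _) => ?_⟩
  obtain ⟨A, hA⟩ := h.exists_vval_eq (lt_trans hk (h.vval_lt_card C))
  exact ⟨A, show vval w A < vval w C by omega, hA⟩

lemma final_setOf_lt_vval (C : DownSet P) : Final (vval w) {A | vval w C < vval w A} := by
  refine ⟨vval w C + 1, Set.Subset.antisymm ?_ fun k hk => ?_⟩
  · rintro _ ⟨A, hA, rfl⟩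
    exact ⟨hA, h.vval_lt_card A⟩
  · obtain ⟨A, hA⟩ := h.exists_vval_eq hk.2
    exact ⟨A, by simp only [Set.mem_ofPred_eq, hA]; exact hk.1, hA⟩

lemma vval_add_one_of_isLUB {B C : DownSet P} (hB : IsLUB {A | vval w A < vval w C} B)
    (hCB : ¬ C ≤ B) : vval w B + 1 = vval w C := by
  have hbot : (⊥ : DownSet P) ∈ {A | vval w A < vval w C} :=
    h.vval_strictMono (bot_lt_iff_ne_bot.2 fun hC => hCB (hC ▸ bot_le))
  obtain ⟨j, hj⟩ := h.2.1 _ (h.initial_setOf_vval_lt C)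
  have hBj : vval w B < j := by
    have : vval w B ∈ vval w '' joinSet _ := ⟨B, DownSet.mem_joinSet_of_isLUB ⟨⊥, hbot⟩ hB, rfl⟩
    rwa [hj] at this
  -- Otherwise the values attained by joins, an initial segment containing `v B`, would contain
  -- `v C`, and the join attaining it would be `C ≤ B`.
  have hBC : vval w B < vval w C := by
    by_contra! hCB'
    obtain ⟨X, ⟨S, hST, hS, rfl⟩, hX⟩ : vval w C ∈ vval w '' joinSet _ := by
      rw [hj]; exact lt_of_le_of_lt hCB' hBj
    exact hCB (h.vval_injective hX ▸ sup'_le _ _ fun A hA => hB.1 (hST hA))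
  obtain ⟨A, hA⟩ := h.exists_vval_eq (k := vval w C - 1) (by have := h.vval_lt_card C; omega)
  have hAB := vval_mono w (hB.1 (show vval w A < vval w C by omega))
  omega

lemma vval_eq_add_one_of_isGLB {B C : DownSet P} (hB : IsGLB {A | vval w C < vval w A} B)
    (hBC : ¬ B ≤ C) : vval w B = vval w C + 1 := by
  have htop : (⊤ : DownSet P) ∈ {A | vval w C < vval w A} :=
    h.vval_strictMono (lt_top_iff_ne_top.2 fun hC => hBC (hC ▸ le_top))
  obtain ⟨j, hj⟩ := h.2.2 _ (h.final_setOf_lt_vval C)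
  have hBj : j ≤ vval w B := by
    have : vval w B ∈ vval w '' meetSet _ := ⟨B, DownSet.mem_meetSet_of_isGLB ⟨⊤, htop⟩ hB, rfl⟩
    rw [hj] at this
    exact this.1
  have hCB : vval w C < vval w B := by
    by_contra! hBC'
    obtain ⟨X, ⟨S, hST, hS, rfl⟩, hX⟩ : vval w C ∈ vval w '' meetSet _ := by
      rw [hj]; exact ⟨hBj.trans hBC', h.vval_lt_card C⟩
    exact hBC (h.vval_injective hX ▸ le_inf' _ _ fun A hA => hB.1 (hST hA))
  obtain ⟨A, hA⟩ := h.exists_vval_eq (k := vval w C + 1) (lt_of_le_of_lt htop (h.vval_lt_card ⊤))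
  have hBA := vval_mono w (hB.1 (show vval w C < vval w A by omega))
  omega

end IsCompleteValuation

end CompleteValuation

section PrincipalSets

variable {P : Type*} [PartialOrder P] [Fintype P] [DecidableRel ((· ≤ ·) : P → P → Prop)]

lemma mem_pd {y z : P} : z ∈ (pd y).1 ↔ z ≤ y := by
  simp [pd]

def notAbove (y : P) : DownSet P :=
  ⟨univ.filter (fun z => ¬ y ≤ z), fun _ _ hba ha => by
    simp only [coe_filter, mem_univ, true_and, Set.mem_ofPred_eq] at ha ⊢
    exact fun hy => ha (hy.trans hba)⟩

lemma mem_notAbove {y z : P} : z ∈ (notAbove y).1 ↔ ¬ y ≤ z := by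
  simp [notAbove]

lemma vval_notAbove_add_vup (w : P → ℕ) (y : P) : vval w (notAbove y) + vup w y = ∑ z, w z :=
  sum_filter_not_add_sum_filter univ (fun z => y ≤ z) w

lemma vup_antitone (w : P → ℕ) : Antitone (vup w) :=
  fun _ _ hxy => sum_le_sum_of_subset fun _ hz => by
    simp only [mem_filter, mem_univ, true_and] at hz ⊢
    exact hxy.trans hz

variable [DecidableEq P]

lemma pd_le_iff {y : P} {A : DownSet P} : pd y ≤ A ↔ y ∈ A.1 :=
  ⟨fun hyA => hyA (mem_pd.2 le_rfl), fun hy _ hz => A.2 (mem_pd.1 hz) hy⟩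

lemma pd_strictMono : StrictMono (pd : P → DownSet P) :=
  strictMono_of_le_iff_le fun _ _ => (pd_le_iff.trans mem_pd).symm

lemma le_notAbove_iff {y : P} {A : DownSet P} : A ≤ notAbove y ↔ y ∉ A.1 :=
  ⟨fun hA hy => mem_notAbove.1 (hA hy) le_rfl,
    fun hy _ hz => mem_notAbove.2 fun hyz => hy (A.2 hyz hz)⟩

lemma notAbove_le_notAbove_iff {x y : P} : notAbove x ≤ notAbove y ↔ x ≤ y :=
  le_notAbove_iff.trans (not_congr mem_notAbove) |>.trans not_not

lemma notAbove_strictMono : StrictMono (notAbove : P → DownSet P) :=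
  strictMono_of_le_iff_le fun _ _ => notAbove_le_notAbove_iff.symm

end PrincipalSets

section LevelSets

variable {P : Type*} [PartialOrder P] [Fintype P] [DecidableEq P]
  [DecidableRel ((· ≤ ·) : P → P → Prop)]

def sublevelPd (w : P → ℕ) (y : P) : DownSet P :=
  ⟨univ.filter (fun z => vval w (pd z) < vval w (pd y)), fun _ _ hba ha => by
    simp only [coe_filter, mem_univ, true_and, Set.mem_ofPred_eq] at ha ⊢
    exact lt_of_le_of_lt (vval_mono w (pd_strictMono.monotone hba)) ha⟩

def superlevelVup (w : P → ℕ) (y : P) : DownSet P :=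
  ⟨univ.filter (fun z => vup w y ≤ vup w z), fun _ _ hba ha => by
    simp only [coe_filter, mem_univ, true_and, Set.mem_ofPred_eq] at ha ⊢
    exact ha.trans (vup_antitone w hba)⟩

lemma isLUB_sublevelPd (w : P → ℕ) (y : P) :
    IsLUB {A | vval w A < vval w (pd y)} (sublevelPd w y) := by
  refine ⟨fun A (hA : vval w A < _) z hz => ?_, fun B hB z hz => ?_⟩
  · simpa [sublevelPd] using lt_of_le_of_lt (vval_mono w (pd_le_iff.2 hz)) hA
  · exact pd_le_iff.1 (hB (show vval w (pd z) < _ by simpa [sublevelPd] using hz))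

lemma isGLB_superlevelVup (w : P → ℕ) (y : P) :
    IsGLB {A | vval w (notAbove y) < vval w A} (superlevelVup w y) := by
  have hy := vval_notAbove_add_vup w y
  refine ⟨fun A (hA : _ < vval w A) z hz => ?_, fun B hB z hz => ?_⟩
  · have hz' : vup w y ≤ vup w z := by simpa [superlevelVup] using hz
    by_contra hzA
    have := vval_mono w (le_notAbove_iff.2 hzA)
    have := vval_notAbove_add_vup w z
    omega
  · simp only [superlevelVup, mem_filter, mem_univ, true_and]
    by_contra! hzy
    have hzB := hB (show vval w (notAbove y) < vval w (notAbove z) by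
      have := vval_notAbove_add_vup w z
      omega)
    exact le_notAbove_iff.1 hzB hz

-- With `x ≤₁ y ↔ v(↓x) ≤ v(↓y)` and `x ≤₂ y ↔ v'(↑y) ≤ v'(↑x)`: the `z <₁ y` with `z ≰ y`, and
-- the `z` with `y <₂ z` and `y ≰ z`.
def incompBefore₁ (w : P → ℕ) (y : P) : Finset P :=
  univ.filter fun z => ¬ z ≤ y ∧ vval w (pd z) < vval w (pd y)

def incompAfter₂ (w : P → ℕ) (y : P) : Finset P :=
  univ.filter fun z => ¬ y ≤ z ∧ vup w z < vup w y

end LevelSets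

namespace IsCompleteValuation

variable {P : Type*} [PartialOrder P] [Fintype P] [DecidableEq P]
  [DecidableRel ((· ≤ ·) : P → P → Prop)] {w : P → ℕ} (h : IsCompleteValuation w)
include h

lemma vval_pd_strictMono : StrictMono fun y : P => vval w (pd y) :=
  h.vval_strictMono.comp pd_strictMono

lemma vup_strictAnti : StrictAnti (vup w) := fun x y hxy => by
  have := h.vval_strictMono (notAbove_strictMono hxy)
  have := vval_notAbove_add_vup w x
  have := vval_notAbove_add_vup w y
  omega

lemma vup_injective : Function.Injective (vup w) := fun x y hxy => by
  have := vval_notAbove_add_vup w x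
  have := vval_notAbove_add_vup w y
  have hxy' : notAbove x = notAbove y := h.vval_injective (by omega)
  exact le_antisymm (notAbove_le_notAbove_iff.1 hxy'.le) (notAbove_le_notAbove_iff.1 hxy'.ge)

lemma sum_vval_pd_lt_add_one (y : P) :
    ∑ z ∈ univ.filter (fun z => vval w (pd z) < vval w (pd y)), w z + 1 = vval w (pd y) :=
  h.vval_add_one_of_isLUB (isLUB_sublevelPd w y) fun hle =>
    lt_irrefl (vval w (pd y)) (by simpa [sublevelPd] using pd_le_iff.1 hle)

lemma sum_vup_lt_add_one (y : P) :
    ∑ z ∈ univ.filter (fun z => vup w z < vup w y), w z + 1 = vup w y := by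
  have hU := h.vval_eq_add_one_of_isGLB (isGLB_superlevelVup w y) fun hle =>
    mem_notAbove.1 (hle (by simp [superlevelVup])) le_rfl
  have hsplit := sum_filter_add_sum_filter_not univ (fun z => vup w y ≤ vup w z) w
  simp only [not_le] at hsplit
  have := vval_notAbove_add_vup w y
  change ∑ z ∈ univ.filter (fun z => vup w y ≤ vup w z), w z = _ at hU
  omega

lemma sum_incompBefore₁_add_one (y : P) : ∑ z ∈ incompBefore₁ w y, w z + 1 = w y := by
  have hsplit := sum_filter_add_sum_filter_not
    (univ.filter fun z => vval w (pd z) < vval w (pd y)) (· ≤ y) w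
  have hbelow : (univ.filter fun z => vval w (pd z) < vval w (pd y)).filter (· ≤ y) =
      (pd y).1.erase y := by
    ext z
    simp only [mem_filter, mem_univ, true_and, mem_erase, mem_pd]
    exact ⟨fun hz => ⟨fun hzy => (hzy ▸ hz.1).false, hz.2⟩,
      fun hz => ⟨h.vval_pd_strictMono (lt_of_le_of_ne hz.2 hz.1), hz.2⟩⟩
  have hincomp : (univ.filter fun z => vval w (pd z) < vval w (pd y)).filter (¬ · ≤ y) =
      incompBefore₁ w y := by
    ext z
    simp [incompBefore₁, and_comm]
  rw [hbelow, hincomp] at hsplit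
  have := sum_erase_add (pd y).1 w (mem_pd.2 le_rfl)
  have := h.sum_vval_pd_lt_add_one y
  simp only [vval] at *
  omega

lemma weight_pos (y : P) : 0 < w y := by
  have := h.sum_incompBefore₁_add_one y
  omega

lemma sum_incompAfter₂_add_one (y : P) : ∑ z ∈ incompAfter₂ w y, w z + 1 = w y := by
  have hsplit := sum_filter_add_sum_filter_not
    (univ.filter fun z => vup w z < vup w y) (y ≤ ·) w
  have habove : (univ.filter fun z => vup w z < vup w y).filter (y ≤ ·) =
      (univ.filter (y ≤ ·)).erase y := by
    ext z
    simp only [mem_filter, mem_univ, true_and, mem_erase]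
    exact ⟨fun hz => ⟨fun hzy => (hzy ▸ hz.1).false, hz.2⟩,
      fun hz => ⟨h.vup_strictAnti (lt_of_le_of_ne hz.2 (Ne.symm hz.1)), hz.2⟩⟩
  have hincomp : (univ.filter fun z => vup w z < vup w y).filter (¬ y ≤ ·) =
      incompAfter₂ w y := by
    ext z
    simp [incompAfter₂, and_comm]
  rw [habove, hincomp] at hsplit
  have := sum_erase_add (univ.filter (y ≤ ·)) w (mem_filter.2 ⟨mem_univ y, le_rfl⟩)
  have := h.sum_vup_lt_add_one y
  simp only [vup] at *
  omega

lemma incompBefore₁_subset_incompAfter₂ (y : P)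
    (ih : ∀ z, vval w (pd z) < vval w (pd y) → incompAfter₂ w z ⊆ incompBefore₁ w z) :
    incompBefore₁ w y ⊆ incompAfter₂ w y := by
  intro z hz
  simp only [incompBefore₁, incompAfter₂, mem_filter, mem_univ, true_and] at hz ⊢
  obtain ⟨hzy, hlt⟩ := hz
  have hne : z ≠ y := fun hzy' => hzy hzy'.le
  refine ⟨fun hyz => (h.vval_pd_strictMono (lt_of_le_of_ne hyz hne.symm)).not_gt hlt, ?_⟩
  by_contra! hle
  have hyz : y ∈ incompAfter₂ w z := by
    simp only [incompAfter₂, mem_filter, mem_univ, true_and]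
    exact ⟨hzy, lt_of_le_of_ne hle fun e => hne (h.vup_injective e).symm⟩
  have := (mem_filter.1 (ih z hlt hyz)).2.2
  omega

theorem incompBefore₁_eq_incompAfter₂ (y : P) : incompBefore₁ w y = incompAfter₂ w y := by
  induction y using (measure fun y : P => vval w (pd y)).wf.induction with
  | _ y ih =>
    have hsub := h.incompBefore₁_subset_incompAfter₂ y fun z hz => (ih z hz).ge
    -- Both sides weigh `w y - 1` and weights are positive, so the inclusion is an equality.
    refine hsub.antisymm fun z hz => ?_
    by_contra hz'
    have := sum_lt_sum_of_subset hsub hz hz' (h.weight_pos z) fun _ _ _ => Nat.zero_le _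
    have := h.sum_incompBefore₁_add_one y
    have := h.sum_incompAfter₂_add_one y
    omega

end IsCompleteValuation

/-- For a complete valuation: `w(y) = 1 + Σ_{x ≺' y} w(x)`, where `x ≺' y` iff
`v(↓x) < v(↓y)` and `v'(↑x) < v'(↑y)`. -/
theorem stmt6 (w : P → ℕ) (h : IsCompleteValuation w) (y : P) :
    w y = 1 + ∑ x ∈ univ.filter
      (fun x => vval w (pd x) < vval w (pd y) ∧ vup w x < vup w y), w x := by
  have hcomp : univ.filter (fun x => vval w (pd x) < vval w (pd y) ∧ vup w x < vup w y) =
      incompBefore₁ w y := by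
    ext x
    simp only [incompBefore₁, mem_filter, mem_univ, true_and]
    refine ⟨fun hx => ⟨fun hxy => ?_, hx.1⟩, fun hx => ⟨hx.2, ?_⟩⟩
    · exact (h.vup_strictAnti (lt_of_le_of_ne hxy fun e => (e ▸ hx.1).false)).not_gt hx.2
    · have hx' : x ∈ incompAfter₂ w y := by
        rw [← h.incompBefore₁_eq_incompAfter₂ y]
        simpa [incompBefore₁] using hx
      exact (mem_filter.1 hx').2.2
  rw [hcomp, ← h.sum_incompBefore₁_add_one y, add_comm]
end

section
/- Let v be a complete valuation on the downset lattice of a finite poset P with weight function w, and let Q be the complementary poset (x ≤' y iff x ≤₁ y and y ≤₂ x, for the induced linear orders ≤₁, ≤₂). Then for every y ∈ P, w(y) equals the number of chains in Q having y as maximum element. -/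
open Finset

variable (P : Type*) [PartialOrder P] [Fintype P] [DecidableEq P]

variable {P}

variable [DecidableRel ((· ≤ ·) : P → P → Prop)]

section Aux
set_option linter.unusedSectionVars false
set_option linter.unusedVariables false
variable {P : Type*} [PartialOrder P] [Fintype P] [DecidableEq P]
  [DecidableRel ((· ≤ ·) : P → P → Prop)]

lemma downset_le_iff {A B : DownSet P} : A ≤ B ↔ A.1 ⊆ B.1 := Iff.rfl

lemma downset_bot_val : ((⊥ : DownSet P).1 : Finset P) = ∅ := rfl

lemma vval_mono_s7 (w : P → ℕ) {A B : DownSet P} (h : A.1 ⊆ B.1) : vval w A ≤ vval w B :=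
  Finset.sum_le_sum_of_subset h

lemma vval_bot (w : P → ℕ) : vval w (⊥ : DownSet P) = 0 := rfl

lemma mem_pd_iff {z x : P} : z ∈ (pd x).1 ↔ z ≤ x := by
  simp [pd]

lemma pd_subset_of_mem (w : P → ℕ) {z : P} {A : DownSet P} (h : z ∈ A.1) :
    (pd z).1 ⊆ A.1 := fun a ha => A.2 (mem_pd_iff.1 ha) h

lemma vd_le_of_mem (w : P → ℕ) {z : P} {A : DownSet P} (h : z ∈ A.1) :
    vval w (pd z) ≤ vval w A := vval_mono_s7 w (pd_subset_of_mem w h)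

lemma vd_mono (w : P → ℕ) {x y : P} (h : x ≤ y) : vval w (pd x) ≤ vval w (pd y) :=
  vd_le_of_mem w (mem_pd_iff.2 h)

/-- The complement of the principal upset of `x`, as a downset. -/
def cpu (x : P) : DownSet P :=
  ⟨univ.filter (fun z => ¬ x ≤ z), by
    intro a b hba ha
    simp only [coe_filter, Set.mem_setOf_eq, mem_univ, true_and] at *
    exact fun hxb => ha (hxb.trans hba)⟩

lemma mem_cpu_iff {z x : P} : z ∈ (cpu x).1 ↔ ¬ x ≤ z := by simp [cpu]

lemma vup_eq_sum (w : P → ℕ) (x : P) : vup w x = ∑ z ∈ univ.filter (fun z => x ≤ z), w z := rfl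

lemma cpu_add_vup (w : P → ℕ) (x : P) : vval w (cpu x) + vup w x = ∑ z, w z := by
  rw [vup_eq_sum]
  rw [show vval w (cpu x) = ∑ z ∈ univ.filter (fun z => ¬ x ≤ z), w z from rfl]
  rw [add_comm]
  exact Finset.sum_filter_add_sum_filter_not univ _ w

lemma vup_antitone_s7 (w : P → ℕ) {x y : P} (h : x ≤ y) : vup w y ≤ vup w x := by
  rw [vup_eq_sum, vup_eq_sum]
  apply Finset.sum_le_sum_of_subset
  intro z hz
  simp only [mem_filter, mem_univ, true_and] at *
  exact h.trans hz

lemma w_le_vup (w : P → ℕ) (x : P) : w x ≤ vup w x := by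
  rw [vup_eq_sum]
  exact Finset.single_le_sum (fun i _ => Nat.zero_le _) (by simp)

lemma w_le_vd (w : P → ℕ) (x : P) : w x ≤ vval w (pd x) :=
  Finset.single_le_sum (fun i _ => Nat.zero_le _) (mem_pd_iff.2 le_rfl)

lemma vup_le_total (w : P → ℕ) (x : P) : vup w x ≤ ∑ z, w z := by
  rw [vup_eq_sum]; exact Finset.sum_le_sum_of_subset (subset_univ _)

end Aux
section Aux2
set_option linter.unusedSectionVars false
set_option linter.unusedVariables false
variable {P : Type*} [PartialOrder P] [Fintype P] [DecidableEq P]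
  [DecidableRel ((· ≤ ·) : P → P → Prop)] {w : P → ℕ}

lemma vinj (h : IsCompleteValuation w) : Function.Injective (vval w (P := P)) := by
  intro A B hAB
  exact h.1.2.1 (Set.mem_univ A) (Set.mem_univ B) hAB

lemma vlt (h : IsCompleteValuation w) (A : DownSet P) :
    vval w A < Fintype.card (DownSet P) := h.1.1 (Set.mem_univ A)

lemma vsurj (h : IsCompleteValuation w) {k : ℕ} (hk : k < Fintype.card (DownSet P)) :
    ∃ A : DownSet P, vval w A = k := by
  obtain ⟨A, -, hA⟩ := h.1.2.2 hk
  exact ⟨A, hA⟩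

lemma wpos (h : IsCompleteValuation w) (x : P) : 0 < w x := by
  by_contra hw
  push_neg at hw
  interval_cases hx : w x
  have hlower : IsLowerSet (((pd x).1.erase x : Finset P) : Set P) := by
    intro a b hba ha
    simp only [coe_erase, Set.mem_diff, mem_coe, mem_pd_iff, Set.mem_singleton_iff] at *
    refine ⟨hba.trans ha.1, fun hbx => ha.2 ?_⟩
    subst hbx
    exact le_antisymm ha.1 hba
  set A' : DownSet P := ⟨(pd x).1.erase x, hlower⟩ with hA'
  have hval : vval w A' = vval w (pd x) := by
    have h2 := Finset.add_sum_erase (pd x).1 w (mem_pd_iff.2 (le_refl x))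
    show ∑ z ∈ (pd x).1.erase x, w z = vval w (pd x)
    rw [show vval w (pd x) = ∑ z ∈ (pd x).1, w z from rfl]
    omega
  have heq := vinj h hval
  have hx' : x ∈ A'.1 := by rw [heq]; exact mem_pd_iff.2 le_rfl
  simp [hA'] at hx'

lemma sum_w_add_one (h : IsCompleteValuation w) :
    ∑ z, w z + 1 = Fintype.card (DownSet P) := by
  set Dtop : DownSet P := ⟨univ, fun a b _ _ => by simp⟩ with hD
  have htop : vval w Dtop = ∑ z, w z := rfl
  have h1 : vval w Dtop < Fintype.card (DownSet P) := vlt h Dtop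
  obtain ⟨A, hA⟩ := vsurj h (show Fintype.card (DownSet P) - 1 < Fintype.card (DownSet P) by omega)
  have h2 : vval w A ≤ vval w Dtop := vval_mono_s7 w (subset_univ _)
  omega

end Aux2
section Aux3
set_option linter.unusedSectionVars false
set_option linter.unusedVariables false
instance {P : Type*} [PartialOrder P] [Fintype P] [DecidableEq P] : DecidableEq (DownSet P) :=
  fun A B => decidable_of_iff (A.1 = B.1) Subtype.ext_iff.symm

variable {P : Type*} [PartialOrder P] [Fintype P] [DecidableEq P]
  [DecidableRel ((· ≤ ·) : P → P → Prop)] {w : P → ℕ}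

/-- The downset of elements whose principal-downset value is `< t`. -/
def dset (w : P → ℕ) (t : ℕ) : DownSet P :=
  ⟨univ.filter (fun z => vval w (pd z) < t), by
    intro a b hba ha
    simp only [coe_filter, Set.mem_setOf_eq, mem_univ, true_and] at *
    exact lt_of_le_of_lt (vd_mono w hba) ha⟩

lemma mem_dset_iff {t : ℕ} {z : P} : z ∈ (dset w t).1 ↔ vval w (pd z) < t := by
  simp [dset]

lemma vd_inj (h : IsCompleteValuation w) {x y : P}
    (hxy : vval w (pd x) = vval w (pd y)) : x = y := by
  have := vinj h hxy
  have h1 : x ∈ (pd y).1 := by rw [← this]; exact mem_pd_iff.2 le_rfl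
  have h2 : y ∈ (pd x).1 := by rw [this]; exact mem_pd_iff.2 le_rfl
  exact le_antisymm (mem_pd_iff.1 h1) (mem_pd_iff.1 h2)

lemma vup_inj (h : IsCompleteValuation w) {x y : P}
    (hxy : vup w x = vup w y) : x = y := by
  have h1 := cpu_add_vup w x
  have h2 := cpu_add_vup w y
  have : vval w (cpu x) = vval w (cpu y) := by omega
  have heq := vinj h this
  have h3 : ¬ x ≤ y → False := by
    intro hxy'
    have : y ∈ (cpu x).1 := mem_cpu_iff.2 hxy'
    rw [heq] at this
    exact (mem_cpu_iff.1 this) le_rfl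
  have h4 : ¬ y ≤ x → False := by
    intro hxy'
    have : x ∈ (cpu y).1 := mem_cpu_iff.2 hxy'
    rw [← heq] at this
    exact (mem_cpu_iff.1 this) le_rfl
  exact le_antisymm (not_not.1 h3) (not_not.1 h4)

lemma vd_strict (h : IsCompleteValuation w) {x y : P} (hxy : x < y) :
    vval w (pd x) < vval w (pd y) :=
  lt_of_le_of_ne (vd_mono w hxy.le) (fun he => absurd (vd_inj h he) hxy.ne)

lemma vup_strict (h : IsCompleteValuation w) {x y : P} (hxy : x < y) :
    vup w y < vup w x :=
  lt_of_le_of_ne (vup_antitone_s7 w hxy.le) (fun he => absurd (vup_inj h he.symm) hxy.ne)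

/-- Key consequence of join-completeness: any downset of value at most `v(dset t)`
is contained in `dset t`. -/
lemma G1 (h : IsCompleteValuation w) (t : ℕ) (C : DownSet P)
    (hC : vval w C ≤ vval w (dset w t)) : C.1 ⊆ (dset w t).1 := by
  by_cases hne : (dset w t).1.Nonempty
  · -- the set T of downsets with value < t
    set T : Set (DownSet P) := {B | vval w B < t} with hT
    have hTinit : Initial (vval w) T := by
      refine ⟨min t (Fintype.card (DownSet P)), ?_⟩
      ext k
      constructor
      · rintro ⟨B, hB, rfl⟩
        exact lt_min hB (vlt h B)
      · intro hk
        obtain ⟨B, hB⟩ := vsurj h (lt_of_lt_of_le hk (min_le_right _ _))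
        refine ⟨B, ?_, hB⟩
        simp only [hT, Set.mem_setOf_eq, hB]
        exact lt_of_lt_of_le hk (min_le_left _ _)
    obtain ⟨j', hj'⟩ := h.2.1 T hTinit
    -- dset w t is the join of the principal downsets of its elements
    have hmemJ : dset w t ∈ joinSet T := by
      set S : Finset (DownSet P) := (dset w t).1.image pd with hS
      have hSne : S.Nonempty := hne.image pd
      refine ⟨S, ?_, hSne, ?_⟩
      · intro B hB
        simp only [hS, coe_image, Set.mem_image, mem_coe] at hB
        obtain ⟨z, hz, rfl⟩ := hB
        exact mem_dset_iff.1 hz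
      · refine le_antisymm ?_ ?_
        · intro z hz
          have : pd z ∈ S := Finset.mem_image_of_mem pd hz
          have hle : pd z ≤ S.sup' hSne id := Finset.le_sup' id this
          exact hle (mem_pd_iff.2 le_rfl)
        · apply Finset.sup'_le
          intro B hB
          simp only [hS, Finset.mem_image] at hB
          obtain ⟨z, hz, rfl⟩ := hB
          intro a ha
          exact mem_dset_iff.2 (lt_of_le_of_lt (vd_le_of_mem w ha) (mem_dset_iff.1 hz))
    have hvd : vval w (dset w t) < j' := by
      have : vval w (dset w t) ∈ vval w '' joinSet T := ⟨_, hmemJ, rfl⟩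
      rw [hj'] at this
      exact this
    have hCj : vval w C ∈ {k | k < j'} := lt_of_le_of_lt hC hvd
    rw [← hj'] at hCj
    obtain ⟨B, hBmem, hBval⟩ := hCj
    have hBC : B = C := vinj h hBval
    subst hBC
    obtain ⟨S, hST, hSne, rfl⟩ := hBmem
    intro a ha
    have : (S.sup' hSne id) ≤ dset w t := by
      apply Finset.sup'_le
      intro B hB
      intro z hz
      exact mem_dset_iff.2 (lt_of_le_of_lt (vd_le_of_mem w hz) (hST hB))
    exact this ha
  · -- dset w t is empty
    rw [Finset.not_nonempty_iff_eq_empty] at hne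
    have h0 : vval w (dset w t) = 0 := by
      show ∑ z ∈ (dset w t).1, w z = 0
      rw [hne]; rfl
    rw [h0, Nat.le_zero] at hC
    have : C = ⊥ := vinj h (by rw [hC, vval_bot])
    rw [this, hne]
    intro a ha
    simp [downset_bot_val] at ha

end Aux3
section Aux4
set_option linter.unusedSectionVars false
set_option linter.unusedVariables false
variable {P : Type*} [PartialOrder P] [Fintype P] [DecidableEq P]
  [DecidableRel ((· ≤ ·) : P → P → Prop)] {w : P → ℕ}

/-- The downset of elements whose principal-upset value is at least `vup w x`. -/
def fset (w : P → ℕ) (x : P) : DownSet P :=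
  ⟨univ.filter (fun z => vup w x ≤ vup w z), by
    intro a b hba ha
    simp only [coe_filter, Set.mem_setOf_eq, mem_univ, true_and] at *
    exact le_trans ha (vup_antitone_s7 w hba)⟩

lemma mem_fset_iff {x z : P} : z ∈ (fset w x).1 ↔ vup w x ≤ vup w z := by
  simp [fset]

lemma subset_cpu_of_notMem {z : P} {B : DownSet P} (hz : z ∉ B.1) :
    B.1 ⊆ (cpu z).1 := by
  intro t ht
  refine mem_cpu_iff.2 (fun hzt => hz ?_)
  exact B.2 hzt ht

lemma fset_subset_of_final (h : IsCompleteValuation w) {x : P} {B : DownSet P}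
    (hB : Fintype.card (DownSet P) - vup w x ≤ vval w B) : (fset w x).1 ⊆ B.1 := by
  intro z hz
  by_contra hzB
  have h1 : vval w B ≤ vval w (cpu z) := vval_mono_s7 w (subset_cpu_of_notMem hzB)
  have h2 := cpu_add_vup w z
  have h3 := sum_w_add_one h
  have h4 : vup w x ≤ vup w z := mem_fset_iff.1 hz
  have h5 : 1 ≤ vup w x := le_trans (wpos h x) (w_le_vup w x)
  have h6 := vup_le_total w x
  omega

/-- Key consequence of meet-completeness: any downset of value at least `v(fset x)`
contains `fset x`. -/
lemma G2 (h : IsCompleteValuation w) (x : P) (C : DownSet P)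
    (hC : vval w (fset w x) ≤ vval w C) : (fset w x).1 ⊆ C.1 := by
  set N := Fintype.card (DownSet P) with hN
  set T : Set (DownSet P) := {B | N - vup w x ≤ vval w B} with hT
  have h5 : 1 ≤ vup w x := le_trans (wpos h x) (w_le_vup w x)
  have h6 := vup_le_total w x
  have h7 := sum_w_add_one h
  have hTfin : Final (vval w) T := by
    refine ⟨N - vup w x, ?_⟩
    ext k
    constructor
    · rintro ⟨B, hB, rfl⟩
      exact ⟨hB, vlt h B⟩
    · rintro ⟨hk1, hk2⟩
      obtain ⟨B, hB⟩ := vsurj h hk2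
      exact ⟨B, by simp only [hT, Set.mem_setOf_eq, hB]; exact hk1, hB⟩
  obtain ⟨j, hj⟩ := h.2.2 T hTfin
  -- fset x is the meet of Dtop and the cpu z for z outside fset x
  have hmemM : fset w x ∈ meetSet T := by
    set Dtop : DownSet P := ⟨univ, fun a b _ _ => by simp⟩ with hD
    set S : Finset (DownSet P) :=
      insert Dtop ((univ.filter (fun z => z ∉ (fset w x).1)).image cpu) with hS
    refine ⟨S, ?_, ⟨Dtop, by simp [hS]⟩, ?_⟩
    · intro B hB
      simp only [hS, coe_insert, Set.mem_insert_iff, coe_image, Set.mem_image, mem_coe,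
        mem_filter, mem_univ, true_and] at hB
      rcases hB with rfl | ⟨z, hz, rfl⟩
      · show N - vup w x ≤ vval w Dtop
        have : vval w Dtop = ∑ z, w z := rfl
        omega
      · show N - vup w x ≤ vval w (cpu z)
        have h8 := cpu_add_vup w z
        have h9 : ¬ vup w x ≤ vup w z := by simpa [mem_fset_iff] using hz
        omega
    · refine le_antisymm ?_ ?_
      · apply Finset.le_inf'
        intro B hB
        simp only [hS, Finset.mem_insert, Finset.mem_image, mem_filter, mem_univ, true_and] at hB
        rcases hB with rfl | ⟨z, hz, rfl⟩
        · intro a ha; exact Finset.mem_univ a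
        · intro a ha
          refine mem_cpu_iff.2 (fun hza => ?_)
          have h10 : vup w x ≤ vup w a := mem_fset_iff.1 ha
          have h11 : vup w a ≤ vup w z := vup_antitone_s7 w hza
          have h12 : ¬ vup w x ≤ vup w z := by simpa [mem_fset_iff] using hz
          omega
      · intro a ha
        by_contra haf
        have hf : ¬ vup w x ≤ vup w a := by simpa [mem_fset_iff] using haf
        have hcpu : cpu a ∈ S := by
          simp only [hS, Finset.mem_insert, Finset.mem_image, mem_filter, mem_univ, true_and]
          exact Or.inr ⟨a, haf, rfl⟩
        have hle : S.inf' ⟨Dtop, by simp [hS]⟩ id ≤ cpu a := Finset.inf'_le id hcpu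
        exact (mem_cpu_iff.1 (hle ha)) le_rfl
  have hvF : j ≤ vval w (fset w x) ∧ vval w (fset w x) < N := by
    have : vval w (fset w x) ∈ vval w '' meetSet T := ⟨_, hmemM, rfl⟩
    rw [hj] at this
    exact this
  have hCj : vval w C ∈ {k | j ≤ k ∧ k < N} := ⟨le_trans hvF.1 hC, vlt h C⟩
  rw [← hj] at hCj
  obtain ⟨B, hBmem, hBval⟩ := hCj
  have hBC : B = C := vinj h hBval
  subst hBC
  obtain ⟨S, hST, hSne, rfl⟩ := hBmem
  have : fset w x ≤ S.inf' hSne id := by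
    apply Finset.le_inf'
    intro B hB
    exact fset_subset_of_final h (hST hB)
  exact this

end Aux4
section Aux5
set_option linter.unusedSectionVars false
set_option linter.unusedVariables false
variable {P : Type*} [PartialOrder P] [Fintype P] [DecidableEq P]
  [DecidableRel ((· ≤ ·) : P → P → Prop)] {w : P → ℕ}

lemma L1 (h : IsCompleteValuation w) (y : P) :
    vval w (dset w (vval w (pd y))) + 1 = vval w (pd y) := by
  set t := vval w (pd y) with ht
  set M := dset w t with hM
  have hgt : vval w M < t := by
    by_contra hle
    push_neg at hle
    have := G1 h t (pd y) hle
    have hy : y ∈ M.1 := this (mem_pd_iff.2 le_rfl)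
    have := mem_dset_iff.1 hy
    omega
  have hle : t ≤ vval w M + 1 := by
    by_contra hgt2
    push_neg at hgt2
    have hlt : vval w M + 1 < Fintype.card (DownSet P) :=
      lt_trans (by omega) (vlt h (pd y))
    obtain ⟨C, hC⟩ := vsurj h hlt
    have hnotsub : ¬ C.1 ⊆ M.1 := by
      intro hsub
      have := vval_mono_s7 w hsub
      omega
    obtain ⟨z, hzC, hzM⟩ := Finset.not_subset.1 hnotsub
    have hz : t ≤ vval w (pd z) := by
      by_contra hz'
      exact hzM (mem_dset_iff.2 (by omega))
    have := vd_le_of_mem w hzC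
    omega
  omega

lemma identityA (h : IsCompleteValuation w) (y : P) :
    vval w (dset w (vval w (pd y) + 1)) + 1 = vval w (pd y) + w y := by
  have hins : (dset w (vval w (pd y) + 1)).1 = insert y (dset w (vval w (pd y))).1 := by
    ext z
    simp only [mem_dset_iff, Finset.mem_insert]
    constructor
    · intro hz
      rcases eq_or_lt_of_le (Nat.lt_succ_iff.1 hz) with he | hlt
      · exact Or.inl (vd_inj h he)
      · exact Or.inr hlt
    · rintro (rfl | hz) <;> omega
  have hy : y ∉ (dset w (vval w (pd y))).1 := by
    simp [mem_dset_iff]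
  have hsum : vval w (dset w (vval w (pd y) + 1)) = w y + vval w (dset w (vval w (pd y))) := by
    show ∑ z ∈ (dset w (vval w (pd y) + 1)).1, w z = _
    rw [hins, Finset.sum_insert hy]
    rfl
  have := L1 h y
  omega

lemma L1' (h : IsCompleteValuation w) (x : P) :
    vval w (fset w x) + vup w x = Fintype.card (DownSet P) := by
  set N := Fintype.card (DownSet P) with hN
  have h5 : 1 ≤ vup w x := le_trans (wpos h x) (w_le_vup w x)
  have h6 := vup_le_total w x
  have h7 := sum_w_add_one h
  have hge : N ≤ vval w (fset w x) + vup w x := by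
    have hx : ¬ vval w (fset w x) ≤ vval w (cpu x) := by
      intro hle
      have := G2 h x (cpu x) hle
      exact (mem_cpu_iff.1 (this (mem_fset_iff.2 le_rfl))) le_rfl
    have := cpu_add_vup w x
    omega
  have hle : vval w (fset w x) + vup w x ≤ N := by
    by_contra hgt
    push_neg at hgt
    have hF1 : 1 ≤ vval w (fset w x) := by omega
    obtain ⟨C, hC⟩ := vsurj h (show vval w (fset w x) - 1 < N from
      lt_trans (by omega) (vlt h (fset w x)))
    have hnotsub : ¬ (fset w x).1 ⊆ C.1 := by
      intro hsub
      have := vval_mono_s7 w hsub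
      omega
    obtain ⟨z, hzF, hzC⟩ := Finset.not_subset.1 hnotsub
    have h8 : vval w C ≤ vval w (cpu z) := vval_mono_s7 w (subset_cpu_of_notMem hzC)
    have h9 := cpu_add_vup w z
    have h10 : vup w x ≤ vup w z := mem_fset_iff.1 hzF
    omega
  omega

lemma identityB (h : IsCompleteValuation w) (x : P) :
    (∑ z ∈ univ.filter (fun z => vup w z ≤ vup w x), w z) + 1 = vup w x + w x := by
  have hsplit : (∑ z ∈ univ.filter (fun z => vup w z < vup w x), w z) +
      vval w (fset w x) = ∑ z, w z := by
    have hfs : (fset w x).1 = univ.filter (fun z => ¬ vup w z < vup w x) := by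
      ext z
      simp only [mem_fset_iff, mem_filter, mem_univ, true_and]
      omega
    rw [show vval w (fset w x) = ∑ z ∈ (fset w x).1, w z from rfl, hfs]
    exact Finset.sum_filter_add_sum_filter_not univ _ w
  have hins : univ.filter (fun z => vup w z ≤ vup w x) =
      insert x (univ.filter (fun z => vup w z < vup w x)) := by
    ext z
    simp only [mem_filter, mem_univ, true_and, Finset.mem_insert]
    constructor
    · intro hz
      rcases eq_or_lt_of_le hz with he | hlt
      · exact Or.inl (vup_inj h he)
      · exact Or.inr hlt
    · rintro (rfl | hz) <;> omega
  have hx : x ∉ univ.filter (fun z => vup w z < vup w x) := by simp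
  rw [hins, Finset.sum_insert hx]
  have := L1' h x
  have h5 : 1 ≤ vup w x := le_trans (wpos h x) (w_le_vup w x)
  have h6 := vup_le_total w x
  have h7 := sum_w_add_one h
  omega

/-- The realizer property: the two induced linear orders recover the partial order. -/
lemma realizer (h : IsCompleteValuation w) {x y : P}
    (h1 : vval w (pd x) ≤ vval w (pd y)) (h2 : vup w y ≤ vup w x) : x ≤ y := by
  by_cases hxy : x = y
  · exact le_of_eq hxy
  by_contra hnle
  -- part (i): w x < w y
  have hwxy : w x < w y := by
    set C₁ : DownSet P := ⟨univ.filter (fun z => vval w (pd z) ≤ vval w (pd x) ∨ z ≤ y), by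
      intro a b hba ha
      simp only [coe_filter, Set.mem_setOf_eq, mem_univ, true_and] at *
      rcases ha with ha | ha
      · exact Or.inl (le_trans (vd_mono w hba) ha)
      · exact Or.inr (hba.trans ha)⟩ with hC₁
    have hxny : x ∉ (pd y).1 := fun hx => hnle (mem_pd_iff.1 hx)
    have hlow : vval w (pd y) + w x ≤ vval w C₁ := by
      have hsub : insert x (pd y).1 ⊆ C₁.1 := by
        intro z hz
        rcases Finset.mem_insert.1 hz with rfl | hz
        · simp only [hC₁, mem_filter, mem_univ, true_and]
          exact Or.inl le_rfl
        · simp only [hC₁, mem_filter, mem_univ, true_and]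
          exact Or.inr (mem_pd_iff.1 hz)
      calc vval w (pd y) + w x = ∑ z ∈ insert x (pd y).1, w z := by
            rw [Finset.sum_insert hxny]; exact (Nat.add_comm _ _)
        _ ≤ vval w C₁ := Finset.sum_le_sum_of_subset hsub
    have hup : vval w C₁ ≤ vval w (dset w (vval w (pd y) + 1)) := by
      apply vval_mono_s7
      intro z hz
      simp only [hC₁, mem_filter, mem_univ, true_and] at hz
      rcases hz with hz | hz
      · exact mem_dset_iff.2 (by omega)
      · exact mem_dset_iff.2 (Nat.lt_succ_of_le (vd_mono w hz))
    have := identityA h y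
    omega
  -- part (ii): w y < w x
  have hwyx : w y < w x := by
    have hyx : y ∉ univ.filter (fun z => x ≤ z) := by
      simp only [mem_filter, mem_univ, true_and]
      exact hnle
    have hlow : vup w x + w y ≤
        ∑ z ∈ univ.filter (fun z => vup w z ≤ vup w y ∨ x ≤ z), w z := by
      have hsub : insert y (univ.filter (fun z => x ≤ z)) ⊆
          univ.filter (fun z => vup w z ≤ vup w y ∨ x ≤ z) := by
        intro z hz
        rcases Finset.mem_insert.1 hz with rfl | hz
        · simp only [mem_filter, mem_univ, true_and]
          exact Or.inl le_rfl
        · simp only [mem_filter, mem_univ, true_and] at *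
          exact Or.inr hz
      calc vup w x + w y = ∑ z ∈ insert y (univ.filter (fun z => x ≤ z)), w z := by
            rw [Finset.sum_insert hyx, vup_eq_sum]; exact (Nat.add_comm _ _)
        _ ≤ _ := Finset.sum_le_sum_of_subset hsub
    have hup : (∑ z ∈ univ.filter (fun z => vup w z ≤ vup w y ∨ x ≤ z), w z) ≤
        ∑ z ∈ univ.filter (fun z => vup w z ≤ vup w x), w z := by
      apply Finset.sum_le_sum_of_subset
      intro z hz
      simp only [mem_filter, mem_univ, true_and] at *
      rcases hz with hz | hz
      · exact le_trans hz h2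
      · exact vup_antitone_s7 w hz
    have := identityB h x
    omega
  omega

end Aux5
section Aux6
set_option linter.unusedSectionVars false
set_option linter.unusedVariables false
variable {P : Type*} [PartialOrder P] [Fintype P] [DecidableEq P]
  [DecidableRel ((· ≤ ·) : P → P → Prop)] {w : P → ℕ}

lemma ncard_interval (h : IsCompleteValuation w) (a b : ℕ)
    (hb : b < Fintype.card (DownSet P)) :
    {A : DownSet P | a < vval w A ∧ vval w A ≤ b}.ncard = b - a := by
  have himg : vval w '' {A : DownSet P | a < vval w A ∧ vval w A ≤ b} = Set.Ioc a b := by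
    ext k
    constructor
    · rintro ⟨A, hA, rfl⟩
      exact ⟨hA.1, hA.2⟩
    · rintro ⟨hk1, hk2⟩
      obtain ⟨A, hA⟩ := vsurj h (lt_of_le_of_lt hk2 hb)
      exact ⟨A, ⟨by omega, by omega⟩, hA⟩
  have := Set.ncard_image_of_injOn (f := vval w)
    (s := {A : DownSet P | a < vval w A ∧ vval w A ≤ b}) ((vinj h).injOn)
  rw [himg] at this
  rw [← this, ← Finset.coe_Ioc, Set.ncard_coe_finset, Nat.card_Ioc]

lemma count_downsets (h : IsCompleteValuation w) (y : P) :
    {A : DownSet P | y ∈ A.1 ∧ A.1 ⊆ (dset w (vval w (pd y) + 1)).1}.ncard = w y := by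
  set a := vval w (dset w (vval w (pd y))) with ha
  set b := vval w (dset w (vval w (pd y) + 1)) with hb
  have hseteq : {A : DownSet P | y ∈ A.1 ∧ A.1 ⊆ (dset w (vval w (pd y) + 1)).1} =
      {A : DownSet P | a < vval w A ∧ vval w A ≤ b} := by
    ext A
    simp only [Set.mem_setOf_eq]
    constructor
    · rintro ⟨hy, hsub⟩
      refine ⟨?_, vval_mono_s7 w hsub⟩
      by_contra hle
      push_neg at hle
      have hAa := G1 h (vval w (pd y)) A hle
      have := mem_dset_iff.1 (hAa hy)
      omega
    · rintro ⟨h1, h2⟩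
      have hsub := G1 h (vval w (pd y) + 1) A h2
      refine ⟨?_, hsub⟩
      by_contra hy
      have hsub2 : A.1 ⊆ (dset w (vval w (pd y))).1 := by
        intro z hz
        have hz1 := mem_dset_iff.1 (hsub hz)
        refine mem_dset_iff.2 ?_
        have hzy : z ≠ y := fun he => hy (he ▸ hz)
        have : vval w (pd z) ≠ vval w (pd y) := fun he => hzy (vd_inj h he)
        omega
      have := vval_mono_s7 w hsub2
      omega
  rw [hseteq, ncard_interval h a b (vlt h _)]
  have h1 := L1 h y
  have h2 := identityA h y
  omega

lemma count_downsets' (h : IsCompleteValuation w) (y : P) :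
    {A : Finset P | IsLowerSet (↑A : Set P) ∧ y ∈ A ∧
      A ⊆ (dset w (vval w (pd y) + 1)).1}.ncard = w y := by
  have himg : Subtype.val '' {A : DownSet P | y ∈ A.1 ∧ A.1 ⊆ (dset w (vval w (pd y) + 1)).1}
      = {A : Finset P | IsLowerSet (↑A : Set P) ∧ y ∈ A ∧
        A ⊆ (dset w (vval w (pd y) + 1)).1} := by
    ext A
    constructor
    · rintro ⟨B, ⟨hB1, hB2⟩, rfl⟩
      exact ⟨B.2, hB1, hB2⟩
    · rintro ⟨h1, h2, h3⟩
      exact ⟨⟨A, h1⟩, ⟨h2, h3⟩, rfl⟩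
  rw [← himg, Set.ncard_image_of_injOn (Subtype.val_injective.injOn)]
  exact count_downsets h y

end Aux6
section Aux7
set_option linter.unusedSectionVars false
set_option linter.unusedVariables false
variable {P : Type*} [PartialOrder P] [Fintype P] [DecidableEq P]
  [DecidableRel ((· ≤ ·) : P → P → Prop)] {w : P → ℕ}

/-- Down-closure of a finite set. -/
def dc (C : Finset P) : Finset P := univ.filter (fun z => ∃ c ∈ C, z ≤ c)

lemma mem_dc {C : Finset P} {z : P} : z ∈ dc C ↔ ∃ c ∈ C, z ≤ c := by simp [dc]

/-- The set of chains with maximum `y` in the complementary order. -/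
def chainSet (w : P → ℕ) (y : P) : Set (Finset P) :=
  {C | y ∈ C ∧ (∀ a ∈ C, vval w (pd a) ≤ vval w (pd y) ∧ vup w a ≤ vup w y) ∧
    ∀ a ∈ C, ∀ b ∈ C, (vval w (pd a) ≤ vval w (pd b) ∧ vup w a ≤ vup w b) ∨
      (vval w (pd b) ≤ vval w (pd a) ∧ vup w b ≤ vup w a)}

/-- The set of downsets `A` with `y ∈ A ⊆ D_y`. -/
def targetSet (w : P → ℕ) (y : P) : Set (Finset P) :=
  {A | IsLowerSet (↑A : Set P) ∧ y ∈ A ∧ A ⊆ (dset w (vval w (pd y) + 1)).1}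

lemma chain_incomp (h : IsCompleteValuation w) {y : P} {C : Finset P}
    (hC : C ∈ chainSet w y) {c c' : P} (hc : c ∈ C) (hc' : c' ∈ C) (hlt : c < c') :
    False := by
  rcases hC.2.2 c hc c' hc' with ⟨h1, h2⟩ | ⟨h1, h2⟩
  · exact absurd h2 (not_le.2 (vup_strict h hlt))
  · exact absurd h1 (not_le.2 (vd_strict h hlt))

lemma mem_chain_iff_max (h : IsCompleteValuation w) {y : P} {C : Finset P}
    (hC : C ∈ chainSet w y) (c : P) :
    c ∈ C ↔ (c ∈ dc C ∧ ∀ z ∈ dc C, ¬ c < z) := by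
  constructor
  · intro hc
    refine ⟨mem_dc.2 ⟨c, hc, le_rfl⟩, fun z hz hcz => ?_⟩
    obtain ⟨c', hc', hzc'⟩ := mem_dc.1 hz
    exact chain_incomp h hC hc hc' (lt_of_lt_of_le hcz hzc')
  · rintro ⟨hc, hmax⟩
    obtain ⟨c₀, hc₀, hcc₀⟩ := mem_dc.1 hc
    rcases eq_or_lt_of_le hcc₀ with rfl | hlt
    · exact hc₀
    · exact absurd hlt (hmax c₀ (mem_dc.2 ⟨c₀, hc₀, le_rfl⟩))

lemma dc_mapsTo (h : IsCompleteValuation w) (y : P) :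
    Set.MapsTo dc (chainSet w y) (targetSet w y) := by
  intro C hC
  refine ⟨?_, mem_dc.2 ⟨y, hC.1, le_rfl⟩, ?_⟩
  · intro a b hba ha
    obtain ⟨c, hc, hac⟩ := mem_dc.1 ha
    exact mem_dc.2 ⟨c, hc, hba.trans hac⟩
  · intro z hz
    obtain ⟨c, hc, hzc⟩ := mem_dc.1 hz
    have h1 := (hC.2.1 c hc).1
    have h2 := vd_mono w hzc
    exact mem_dset_iff.2 (by omega)

lemma dc_injOn (h : IsCompleteValuation w) (y : P) :
    Set.InjOn dc (chainSet w y) := by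
  intro C hC C' hC' he
  ext c
  rw [mem_chain_iff_max h hC c, mem_chain_iff_max h hC' c, he]

lemma dc_surjOn (h : IsCompleteValuation w) (y : P) :
    Set.SurjOn dc (chainSet w y) (targetSet w y) := by
  rintro A ⟨hlow, hyA, hsub⟩
  classical
  set C : Finset P := A.filter (fun c => ∀ z ∈ A, ¬ c < z) with hCdef
  have hCsub : ∀ c ∈ C, c ∈ A ∧ ∀ z ∈ A, ¬ c < z := by
    intro c hc
    simpa [hCdef] using hc
  have hvdA : ∀ z ∈ A, vval w (pd z) ≤ vval w (pd y) := by
    intro z hz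
    have := mem_dset_iff.1 (hsub hz)
    omega
  have hymax : ∀ z ∈ A, ¬ y < z := by
    intro z hz hlt
    exact absurd (hvdA z hz) (not_le.2 (vd_strict h hlt))
  have hyC : y ∈ C := by
    simp only [hCdef, mem_filter]
    exact ⟨hyA, hymax⟩
  -- key: comparability in the complementary order for elements of C
  have hcomp : ∀ a ∈ C, ∀ b ∈ C, vval w (pd a) ≤ vval w (pd b) →
      vval w (pd a) ≤ vval w (pd b) ∧ vup w a ≤ vup w b := by
    intro a ha b hb hvd
    refine ⟨hvd, ?_⟩
    rcases le_total (vup w a) (vup w b) with hv | hv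
    · exact hv
    · have hab : a ≤ b := realizer h hvd hv
      rcases eq_or_lt_of_le hab with rfl | hlt
      · exact le_rfl
      · exact absurd hlt ((hCsub a ha).2 b (hCsub b hb).1)
  have hCchain : C ∈ chainSet w y := by
    refine ⟨hyC, ?_, ?_⟩
    · intro a ha
      exact hcomp a ha y hyC (hvdA a (hCsub a ha).1)
    · intro a ha b hb
      rcases le_total (vval w (pd a)) (vval w (pd b)) with hvd | hvd
      · exact Or.inl (hcomp a ha b hb hvd)
      · exact Or.inr (hcomp b hb a ha hvd)
  refine ⟨C, hCchain, ?_⟩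
  -- dc C = A
  apply Finset.Subset.antisymm
  · intro z hz
    obtain ⟨c, hc, hzc⟩ := mem_dc.1 hz
    exact hlow hzc (by exact_mod_cast (hCsub c hc).1)
  · intro a ha
    set B : Finset P := A.filter (fun c => a ≤ c) with hBdef
    have hBne : B.Nonempty := ⟨a, by simp [hBdef, ha]⟩
    obtain ⟨c, hcB, hcmax⟩ := Finset.exists_max_image B (fun c => vval w (pd c)) hBne
    have hcA : c ∈ A ∧ a ≤ c := by simpa [hBdef] using hcB
    have hcC : c ∈ C := by
      simp only [hCdef, mem_filter]
      refine ⟨hcA.1, fun z hz hlt => ?_⟩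
      have hzB : z ∈ B := by
        simp only [hBdef, mem_filter]
        exact ⟨hz, hcA.2.trans hlt.le⟩
      exact absurd (hcmax z hzB) (not_le.2 (vd_strict h hlt))
    exact mem_dc.2 ⟨c, hcC, hcA.2⟩

end Aux7

/-- For a complete valuation, `w(y)` equals the number of chains in the complementary
poset `Q` (from the induced linear orders) having `y` as maximum element. -/
theorem stmt7 (w : P → ℕ) (h : IsCompleteValuation w) (y : P) :
    w y = chainCount (fun a b => vval w (pd a) ≤ vval w (pd b))
      (fun a b => vup w b ≤ vup w a) y := by
  have hcc : chainCount (fun a b => vval w (pd a) ≤ vval w (pd b))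
      (fun a b => vup w b ≤ vup w a) y = (chainSet w y).ncard := rfl
  have hbij : Set.BijOn dc (chainSet w y) (targetSet w y) :=
    ⟨dc_mapsTo h y, dc_injOn h y, dc_surjOn h y⟩
  have h1 : (targetSet w y).ncard = w y := count_downsets' h y
  have h2 : targetSet w y = dc '' chainSet w y := (hbij.image_eq).symm
  rw [hcc, ← h1, h2, Set.ncard_image_of_injOn (dc_injOn h y)]
end
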